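/- Let A be a ring, I an injective left A-module, and M a cochain complex of left A-modules. Then for every n ∈ ℤ there is an isomorphism H^n(Hom_A(M, I)) ≅ Hom_A(H^{-n}(M), I), natural in M. -/

import Mathlib

/-
The functor `Hom_A(-, I)` is exact for injective `I`, so it commutes with taking homology of
short complexes. In degree `n`, the short complex of `Hom_A(M, I)` is literally `Hom_A(-, I)`
applied to the opposite of the short complex of `M` at `-n`, and the homology of an opposite
short complex is the opposite of its homology. Composing these natural isomorphisms of functors
in `M` gives the isomorphism together with its naturality.
-/

universe u

open CategoryTheory

variable (A : Type u) [Ring A]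

/-- The `Hom` complex `Hom_A(M, I)` of a cochain complex `M` of left `A`-modules into a
single left `A`-module `I`: its degree `n` component is the abelian group
`Hom_A(M^{-n}, I)`, with differential given by precomposition with the differential
of `M`. -/
noncomputable def homCplx (M : CochainComplex (ModuleCat.{u} A) ℤ) (I : ModuleCat.{u} A) :
    CochainComplex AddCommGrpCat.{u} ℤ :=
  CochainComplex.of (fun n => AddCommGrpCat.of ((M.X (-n)) →ₗ[A] I))
    (fun n => AddCommGrpCat.ofHom
      { toFun := fun f => f ∘ₗ ((M.d (-(n + 1)) (-n)).hom : M.X (-(n+1)) →ₗ[A] M.X (-n))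
        map_zero' := by ext x; simp
        map_add' := by intro f g; ext x; simp })
    (fun n => by
      ext f x
      have h := M.d_comp_d (-(n + 1 + 1)) (-(n + 1)) (-n)
      have hx : (M.d (-(n+1)) (-n)).hom ((M.d (-(n+1+1)) (-(n+1))).hom x) = 0 := by
        have h2 := congrArg (fun g => g.hom x) h
        simpa only [ModuleCat.hom_comp, LinearMap.comp_apply, ModuleCat.hom_zero,
          LinearMap.zero_apply] using h2
      simp [hx])

/-- The map of `Hom` complexes `Hom_A(N, I) ⟶ Hom_A(M, I)` induced by precomposition with
a chain map `φ : M ⟶ N`. -/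
noncomputable def homCplxMap {M N : CochainComplex (ModuleCat.{u} A) ℤ} (φ : M ⟶ N)
    (I : ModuleCat.{u} A) : homCplx A N I ⟶ homCplx A M I where
  f n := AddCommGrpCat.ofHom
    { toFun := fun f => f ∘ₗ ((φ.f (-n)).hom : M.X (-n) →ₗ[A] N.X (-n))
      map_zero' := by ext x; simp
      map_add' := by intro f g; ext x; simp }
  comm' := by
    intro i j hij
    obtain rfl : i + 1 = j := hij
    ext f
    apply LinearMap.ext
    intro x
    have h := φ.comm (-(i + 1)) (-i)
    have hx : (φ.f (-i)).hom ((M.d (-(i+1)) (-i)).hom x) = (N.d (-(i+1)) (-i)).hom ((φ.f (-(i+1))).hom x) := by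
      have h2 := congrArg (fun g => g.hom x) h
      simpa only [ModuleCat.hom_comp, LinearMap.comp_apply] using h2.symm
    simp [homCplx]
    exact congrArg (fun y => (show N.X (-i) →ₗ[A] I from f) y) hx

/-- Precomposition `Hom_A(Y, I) ⟶ Hom_A(X, I)` with a linear map `g : X ⟶ Y`, as a
morphism of abelian groups. -/
noncomputable def precompHom {X Y : ModuleCat.{u} A} (g : X ⟶ Y) (I : ModuleCat.{u} A) :
    AddCommGrpCat.of ((Y : Type u) →ₗ[A] I) ⟶ AddCommGrpCat.of ((X : Type u) →ₗ[A] I) :=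
  AddCommGrpCat.ofHom
    { toFun := fun f => f ∘ₗ (g.hom : X →ₗ[A] Y)
      map_zero' := by ext x; simp
      map_add' := by intro f g; ext x; simp }

noncomputable def linearHomFunctor (I : ModuleCat.{u} A) :
    (ModuleCat.{u} A)ᵒᵖ ⥤ AddCommGrpCat.{u} where
  obj X := AddCommGrpCat.of ((X.unop : Type u) →ₗ[A] I)
  map f := precompHom A f.unop I

instance (I : ModuleCat.{u} A) : (linearHomFunctor A I).Additive where
  map_add {X _ _ _} := by
    ext (h : (X.unop : Type u) →ₗ[A] I)
    exact LinearMap.ext fun _ => map_add h _ _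

noncomputable def preadditiveYonedaObjIsoLinearHomFunctor (I : ModuleCat.{u} A) :
    preadditiveYoneda.obj I ≅ linearHomFunctor A I :=
  NatIso.ofComponents (fun _ => ModuleCat.homAddEquiv.toAddCommGrpIso) (fun _ => rfl)

instance (I : ModuleCat.{u} A) [Module.Injective A I] :
    (linearHomFunctor A I).PreservesHomology := by
  have : Injective I := Module.injective_object_of_injective_module A I
  refine Functor.preservesHomology_of_map_exact _ fun S hS => ?_
  exact ShortComplex.exact_of_iso
    (ShortComplex.mapNatIso S (preadditiveYonedaObjIsoLinearHomFunctor A I))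
    ((hS.map (preadditiveYonedaObj I)).map (forget₂ _ _))

lemma homCplx_d (M : CochainComplex (ModuleCat.{u} A) ℤ) (I : ModuleCat.{u} A) {i j : ℤ}
    (h : i + 1 = j) :
    (homCplx A M I).d i j = (linearHomFunctor A I).map (M.d (-j) (-i)).op := by
  subst h
  ext f
  simp [homCplx, CochainComplex.of.d, precompHom, linearHomFunctor]

noncomputable def homCplxFunctor (I : ModuleCat.{u} A) :
    (CochainComplex (ModuleCat.{u} A) ℤ)ᵒᵖ ⥤ CochainComplex AddCommGrpCat.{u} ℤ where
  obj M := homCplx A M.unop I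
  map φ := homCplxMap A φ.unop I

open HomologicalComplex in
noncomputable def homCplxSc'Iso (I : ModuleCat.{u} A) (n : ℤ) :
    homCplxFunctor A I ⋙ shortComplexFunctor' _ (ComplexShape.up ℤ) (n - 1) n (n + 1) ≅
      (shortComplexFunctor' _ (ComplexShape.up ℤ) (-(n + 1)) (-n) (-(n - 1))).op ⋙
        ShortComplex.opFunctor _ ⋙ (linearHomFunctor A I).mapShortComplex :=
  NatIso.ofComponents
    (fun M => ShortComplex.isoMk (Iso.refl _) (Iso.refl _) (Iso.refl _)
      ((Category.id_comp _).trans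
        ((homCplx_d A M.unop I (sub_add_cancel n 1)).symm.trans (Category.comp_id _).symm))
      ((Category.id_comp _).trans
        ((homCplx_d A M.unop I rfl).symm.trans (Category.comp_id _).symm)))
    (fun φ => by ext <;> rfl)

open HomologicalComplex in
noncomputable def homologyHomCplxNatIso (I : ModuleCat.{u} A) [Module.Injective A I] (n : ℤ) :
    homCplxFunctor A I ⋙ homologyFunctor _ (ComplexShape.up ℤ) n ≅
      (homologyFunctor _ (ComplexShape.up ℤ) (-n)).op ⋙ linearHomFunctor A I :=
  let F := shortComplexFunctor' (ModuleCat.{u} A) (ComplexShape.up ℤ) (-(n + 1)) (-n) (-(n - 1))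
  Functor.isoWhiskerLeft _ (homologyFunctorIso' _ _ (n - 1) n (n + 1)
      (CochainComplex.prev ℤ n) (CochainComplex.next ℤ n)) ≪≫
    Functor.isoWhiskerRight (homCplxSc'Iso A I n) (ShortComplex.homologyFunctor _) ≪≫
    Functor.isoWhiskerLeft (F.op ⋙ ShortComplex.opFunctor _)
      (ShortComplex.homologyFunctorIso (linearHomFunctor A I)) ≪≫
    Functor.isoWhiskerLeft F.op (Functor.isoWhiskerRight
      (ShortComplex.homologyFunctorOpNatIso _).symm (linearHomFunctor A I)) ≪≫
    Functor.isoWhiskerRight (NatIso.op (homologyFunctorIso' _ (ComplexShape.up ℤ)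
      (-(n + 1)) (-n) (-(n - 1)) (by simp; ring) (by simp; ring))) (linearHomFunctor A I)

/-- For a ring `A`, an injective left `A`-module `I` and a cochain complex `M` of left
`A`-modules, there is an isomorphism `H^n(Hom_A(M, I)) ≅ Hom_A(H^{-n}(M), I)` for every
`n ∈ ℤ`, natural in `M`. -/
theorem homology_homCplx_iso_hom_homology (I : ModuleCat.{u} A)
    (hI : Module.Injective A I) :
    ∃ e : ∀ (M : CochainComplex (ModuleCat.{u} A) ℤ) (n : ℤ),
        (homCplx A M I).homology n ≅ AddCommGrpCat.of ((M.homology (-n) : Type u) →ₗ[A] I),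
      ∀ (M N : CochainComplex (ModuleCat.{u} A) ℤ) (φ : M ⟶ N) (n : ℤ),
        HomologicalComplex.homologyMap (homCplxMap A φ I) n ≫ (e M n).hom =
          (e N n).hom ≫ precompHom A (HomologicalComplex.homologyMap φ (-n)) I :=
  ⟨fun M n => (homologyHomCplxNatIso A I n).app (Opposite.op M),
    fun _ _ φ n => (homologyHomCplxNatIso A I n).hom.naturality φ.op⟩
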